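/- (Oscillations dominate maximal functions) Let k ∈ ℤ₊ and (𝔞_t : t ∈ ℝ^k) be a k-parameter family of measurable functions on a σ-finite measure space X, continuous in t almost everywhere or with 𝕀 countable. Let 𝕀 ⊆ ℝ with #𝕀 ≥ 2. Then for every p ∈ [1, ∞], ‖ sup_{t ∈ (𝕀 \ {sup 𝕀})^k} |𝔞_t| ‖_{L^p(X)} ≤ sup_{t ∈ 𝕀^k} ‖𝔞_t‖_{L^p(X)} + sup_{J ∈ ℤ₊} sup_{I ∈ 𝔖_J(𝕀)} ‖ O_{Ī,J}(𝔞_t : t ∈ 𝕀^k) ‖_{L^p(X)}, where Ī is the diagonal sequence associated with I. -/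

import Mathlib

open MeasureTheory
open scoped ENNReal

/-- The `L^p`-"norm" (for `p ∈ [1,∞]`) of an `ℝ≥0∞`-valued function. -/
noncomputable def eLpE {X : Type*} [MeasurableSpace X] (μ : Measure X) (p : ℝ≥0∞)
    (g : X → ℝ≥0∞) : ℝ≥0∞ :=
  if p = ∞ then essSup g μ
  else (∫⁻ x, g x ^ p.toReal ∂μ) ^ (1 / p.toReal)

private lemma exists_gt_of_ne_sSup {𝕀 : Set ℝ} (h𝕀 : 𝕀.Nontrivial) {u : ℝ}
    (hu : u ∈ 𝕀) (hne : u ≠ sSup 𝕀) : ∃ s ∈ 𝕀, u < s := by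
  by_contra h
  push_neg at h
  exact hne (le_antisymm (le_csSup ⟨u, h⟩ hu) (csSup_le h𝕀.nonempty h))

private lemma iSup_rpow_aux {q : ℝ} (hq : 0 < q) (g : ℕ → ℝ≥0∞) :
    (⨆ n, g n) ^ q = ⨆ n, g n ^ q := by
  apply le_antisymm
  · have h1 : (⨆ n, g n) ≤ (⨆ n, g n ^ q) ^ (1 / q) := by
      refine iSup_le fun n => ?_
      have := ENNReal.rpow_le_rpow (le_iSup (fun n => g n ^ q) n)
        (by positivity : (0:ℝ) ≤ 1 / q)
      rwa [← ENNReal.rpow_mul, mul_one_div, div_self hq.ne', ENNReal.rpow_one] at this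
    calc (⨆ n, g n) ^ q ≤ ((⨆ n, g n ^ q) ^ (1 / q)) ^ q :=
          ENNReal.rpow_le_rpow h1 hq.le
      _ = ⨆ n, g n ^ q := by
          rw [← ENNReal.rpow_mul, one_div_mul_cancel hq.ne', ENNReal.rpow_one]
  · exact iSup_le fun n => ENNReal.rpow_le_rpow (le_iSup g n) hq.le

private lemma eLpE_mono {X : Type*} [MeasurableSpace X] (μ : Measure X) (p : ℝ≥0∞)
    {f g : X → ℝ≥0∞} (h : ∀ x, f x ≤ g x) : eLpE μ p f ≤ eLpE μ p g := by
  unfold eLpE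
  split_ifs with hp
  · exact essSup_mono_ae (Filter.Eventually.of_forall h)
  · exact ENNReal.rpow_le_rpow
      (lintegral_mono fun x => ENNReal.rpow_le_rpow (h x) ENNReal.toReal_nonneg)
      (by positivity)

private lemma eLpE_add_le {X : Type*} [MeasurableSpace X] (μ : Measure X) {p : ℝ≥0∞}
    (hp : 1 ≤ p) {f g : X → ℝ≥0∞} (hf : AEMeasurable f μ) (hg : AEMeasurable g μ) :
    eLpE μ p (fun x => f x + g x) ≤ eLpE μ p f + eLpE μ p g := by
  unfold eLpE
  split_ifs with h
  · exact ENNReal.essSup_add_le f g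
  · refine ENNReal.lintegral_Lp_add_le hf hg ?_
    rw [← ENNReal.toReal_one]
    exact ENNReal.toReal_mono h hp

private lemma eLpE_iSup_le {X : Type*} [MeasurableSpace X] (μ : Measure X) {p : ℝ≥0∞}
    (hp : 1 ≤ p) {f : ℕ → X → ℝ≥0∞} (hm : ∀ n, Measurable (f n)) (hmono : Monotone f)
    {B : ℝ≥0∞} (hB : ∀ n, eLpE μ p (f n) ≤ B) :
    eLpE μ p (fun x => ⨆ n, f n x) ≤ B := by
  rcases eq_or_ne p ∞ with h | h
  · simp only [eLpE, if_pos h] at hB ⊢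
    have hae : ∀ᵐ x ∂μ, ∀ n, f n x ≤ B :=
      ae_all_iff.mpr fun n => (ENNReal.ae_le_essSup (f n)).mono fun x hx => hx.trans (hB n)
    exact essSup_le_of_ae_le B (hae.mono fun x hx => iSup_le hx)
  · simp only [eLpE, if_neg h] at hB ⊢
    have hq : 0 < p.toReal :=
      ENNReal.toReal_pos (lt_of_lt_of_le one_pos hp).ne' h
    have key : ∫⁻ x, (⨆ n, f n x) ^ p.toReal ∂μ
        = ⨆ n, ∫⁻ x, f n x ^ p.toReal ∂μ := by
      rw [← lintegral_iSup (fun n => (hm n).pow_const _)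
        (fun n m hnm x => ENNReal.rpow_le_rpow (hmono hnm x) hq.le)]
      exact lintegral_congr fun x => iSup_rpow_aux hq _
    rw [key]
    have step : (⨆ n, ∫⁻ x, f n x ^ p.toReal ∂μ) ≤ B ^ p.toReal := by
      refine iSup_le fun n => ?_
      have := ENNReal.rpow_le_rpow (hB n) hq.le
      rwa [← ENNReal.rpow_mul, one_div_mul_cancel hq.ne', ENNReal.rpow_one] at this
    calc (⨆ n, ∫⁻ x, f n x ^ p.toReal ∂μ) ^ (1 / p.toReal)
        ≤ (B ^ p.toReal) ^ (1 / p.toReal) := ENNReal.rpow_le_rpow step (by positivity)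
      _ = B := by rw [← ENNReal.rpow_mul, mul_one_div, div_self hq.ne', ENNReal.rpow_one]

private lemma sq_rpow_half (x : ℝ≥0∞) : (x ^ 2) ^ (1 / 2 : ℝ) = x := by
  rw [← ENNReal.rpow_natCast x 2, ← ENNReal.rpow_mul]
  norm_num

/-- Oscillations dominate maximal functions:
`‖sup_{t ∈ (𝕀∖{sup 𝕀})^k} |𝔞_t|‖_{L^p} ≤ sup_{t ∈ 𝕀^k} ‖𝔞_t‖_{L^p}
  + sup_J sup_{I ∈ 𝔖_J(𝕀)} ‖O_{Ī,J}(𝔞_t : t ∈ 𝕀^k)‖_{L^p}`,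
where `Ī` is the diagonal sequence associated with `I`. -/
theorem stmt_19 {X : Type*} [MeasurableSpace X] (μ : Measure X) [SigmaFinite μ]
    (k : ℕ) (hk : 0 < k) (a : (Fin k → ℝ) → X → ℂ) (ha : ∀ t, Measurable (a t))
    (𝕀 : Set ℝ) (h𝕀 : 𝕀.Nontrivial) (hc : 𝕀.Countable)
    (p : ℝ≥0∞) (hp : 1 ≤ p) :
    eLpE μ p (fun x => ⨆ (t : Fin k → ℝ) (_ : ∀ i, t i ∈ 𝕀 ∧ t i ≠ sSup 𝕀),
        (‖a t x‖₊ : ℝ≥0∞))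
      ≤ (⨆ (t : Fin k → ℝ) (_ : ∀ i, t i ∈ 𝕀),
            eLpE μ p (fun x => (‖a t x‖₊ : ℝ≥0∞)))
        + ⨆ (J : ℕ) (_ : 0 < J) (I : ℕ → ℝ)
            (_ : (∀ i ≤ J, I i ∈ 𝕀) ∧ ∀ i < J, I i < I (i + 1)),
          eLpE μ p (fun x => (∑ j ∈ Finset.range J,
              (⨆ (t : Fin k → ℝ) (_ : ∀ i, t i ∈ 𝕀 ∧ I j ≤ t i ∧ t i < I (j + 1)),
                (‖a t x - a (fun _ => I j) x‖₊ : ℝ≥0∞)) ^ 2) ^ (1 / 2 : ℝ)) := by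
  classical
  -- the admissible parameter set is countable and nonempty
  have hTc : {t : Fin k → ℝ | ∀ i, t i ∈ 𝕀 ∧ t i ≠ sSup 𝕀}.Countable :=
    Set.Countable.mono (fun t ht i => (ht i).1) (Set.countable_pi fun _ => hc)
  obtain ⟨u, hu, v, hv, huv⟩ := id h𝕀
  have hex : ∃ w, w ∈ 𝕀 ∧ w ≠ sSup 𝕀 := by
    by_cases h : u = sSup 𝕀
    · exact ⟨v, hv, fun hv' => huv (h.trans hv'.symm)⟩
    · exact ⟨u, hu, h⟩
  obtain ⟨w, hw𝕀, hwne⟩ := hex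
  have hTne : {t : Fin k → ℝ | ∀ i, t i ∈ 𝕀 ∧ t i ≠ sSup 𝕀}.Nonempty :=
    ⟨fun _ => w, fun _ => ⟨hw𝕀, hwne⟩⟩
  obtain ⟨e, hT⟩ := Set.Countable.exists_eq_range hTc hTne
  have he : ∀ n, ∀ i, e n i ∈ 𝕀 ∧ e n i ≠ sSup 𝕀 := by
    intro n
    have : e n ∈ {t : Fin k → ℝ | ∀ i, t i ∈ 𝕀 ∧ t i ≠ sSup 𝕀} := by
      rw [hT]; exact Set.mem_range_self n
    exact this
  -- finite stages
  set f : ℕ → X → ℝ≥0∞ :=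
    fun n x => ⨆ m, ⨆ (_ : m ≤ n), (‖a (e m) x‖₊ : ℝ≥0∞) with hfdef
  have hfm : ∀ n, Measurable (f n) := fun n =>
    Measurable.iSup fun m => Measurable.iSup fun _ => (ha (e m)).nnnorm.coe_nnreal_ennreal
  have hfmono : Monotone f := by
    intro n m hnm x
    exact iSup₂_le fun j hj =>
      le_iSup₂ (f := fun j (_ : j ≤ m) => ((‖a (e j) x‖₊ : ℝ≥0∞))) j (hj.trans hnm)
  have hLHS : (fun x => ⨆ (t : Fin k → ℝ) (_ : ∀ i, t i ∈ 𝕀 ∧ t i ≠ sSup 𝕀),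
      (‖a t x‖₊ : ℝ≥0∞)) = fun x => ⨆ n, f n x := by
    funext x
    apply le_antisymm
    · refine iSup₂_le fun t ht => ?_
      have hmem : t ∈ Set.range e := by rw [← hT]; exact ht
      obtain ⟨n, rfl⟩ := hmem
      exact le_trans
        (le_iSup₂ (f := fun m (_ : m ≤ n) => ((‖a (e m) x‖₊ : ℝ≥0∞))) n le_rfl)
        (le_iSup (fun n => f n x) n)
    · refine iSup_le fun n => iSup₂_le fun m _ => ?_
      exact le_iSup₂ (f := fun t (_ : ∀ i, t i ∈ 𝕀 ∧ t i ≠ sSup 𝕀) =>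
        ((‖a t x‖₊ : ℝ≥0∞))) (e m) (he m)
  rw [hLHS]
  refine eLpE_iSup_le μ hp hfm hfmono ?_
  intro n
  -- collect all coordinates used up to stage n
  set C : Finset ℝ := (Finset.range (n + 1) ×ˢ (Finset.univ : Finset (Fin k))).image
    (fun q => e q.1 q.2) with hC
  have hCne : C.Nonempty := by
    refine ⟨e 0 ⟨0, hk⟩, Finset.mem_image.mpr ⟨(0, ⟨0, hk⟩), ?_, rfl⟩⟩
    simp
  have hmemC : ∀ r ∈ C, r ∈ 𝕀 ∧ r ≠ sSup 𝕀 := by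
    intro r hr
    obtain ⟨q, _, rfl⟩ := Finset.mem_image.mp hr
    exact he q.1 q.2
  set c := C.min' hCne with hcdef
  set M := C.max' hCne with hMdef
  obtain ⟨s, hs𝕀, hMs⟩ := exists_gt_of_ne_sSup h𝕀 (hmemC M (C.max'_mem hCne)).1
    (hmemC M (C.max'_mem hCne)).2
  have hc𝕀 : c ∈ 𝕀 := (hmemC c (C.min'_mem hCne)).1
  have hcs : c < s := lt_of_le_of_lt (C.min'_le M (C.max'_mem hCne)) hMs
  set h : X → ℝ≥0∞ := fun x => ⨆ (t : Fin k → ℝ)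
      (_ : ∀ i, t i ∈ 𝕀 ∧ c ≤ t i ∧ t i < s),
      (‖a t x - a (fun _ => c) x‖₊ : ℝ≥0∞) with hhdef
  -- pointwise domination
  have hpt : ∀ x, f n x ≤ (‖a (fun _ => c) x‖₊ : ℝ≥0∞) + h x := by
    intro x
    refine iSup₂_le fun m hm => ?_
    have hmemi : ∀ i, e m i ∈ C := fun i => Finset.mem_image.mpr
      ⟨(m, i), by simp [Finset.mem_product, Nat.lt_succ_iff, hm], rfl⟩
    have hQm : ∀ i, e m i ∈ 𝕀 ∧ c ≤ e m i ∧ e m i < s := fun i =>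
      ⟨(he m i).1, C.min'_le _ (hmemi i), lt_of_le_of_lt (C.le_max' _ (hmemi i)) hMs⟩
    have tri : (‖a (e m) x‖₊ : ℝ≥0∞)
        ≤ (‖a (fun _ => c) x‖₊ : ℝ≥0∞) + (‖a (e m) x - a (fun _ => c) x‖₊ : ℝ≥0∞) := by
      have h1 := nnnorm_add_le (a (fun _ => c) x) (a (e m) x - a (fun _ => c) x)
      rw [add_sub_cancel] at h1
      exact_mod_cast h1
    refine tri.trans (add_le_add (le_refl _) ?_)
    exact le_iSup₂ (f := fun t (_ : ∀ i, t i ∈ 𝕀 ∧ c ≤ t i ∧ t i < s) =>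
      ((‖a t x - a (fun _ => c) x‖₊ : ℝ≥0∞))) (e m) hQm
  -- measurability of the oscillation-type function
  have hQc : Countable {t : Fin k → ℝ // ∀ i, t i ∈ 𝕀 ∧ c ≤ t i ∧ t i < s} := by
    have : {t : Fin k → ℝ | ∀ i, t i ∈ 𝕀 ∧ c ≤ t i ∧ t i < s}.Countable :=
      Set.Countable.mono (fun t ht i => (ht i).1) (Set.countable_pi fun _ => hc)
    exact this.to_subtype
  have hhm : Measurable h := by
    have heq : h = fun x => ⨆ (t : {t : Fin k → ℝ // ∀ i, t i ∈ 𝕀 ∧ c ≤ t i ∧ t i < s}),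
        (‖a t.1 x - a (fun _ => c) x‖₊ : ℝ≥0∞) := by
      funext x
      apply le_antisymm
      · exact iSup₂_le fun t ht => le_iSup
          (fun t : {t : Fin k → ℝ // ∀ i, t i ∈ 𝕀 ∧ c ≤ t i ∧ t i < s} =>
            ((‖a t.1 x - a (fun _ => c) x‖₊ : ℝ≥0∞))) ⟨t, ht⟩
      · exact iSup_le fun t => le_iSup₂
          (f := fun t (_ : ∀ i, t i ∈ 𝕀 ∧ c ≤ t i ∧ t i < s) =>
            ((‖a t x - a (fun _ => c) x‖₊ : ℝ≥0∞))) t.1 t.2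
    rw [heq]
    exact Measurable.iSup fun t => ((ha t.1).sub (ha (fun _ => c))).nnnorm.coe_nnreal_ennreal
  have hfirst : eLpE μ p (fun x => (‖a (fun _ => c) x‖₊ : ℝ≥0∞))
      ≤ ⨆ (t : Fin k → ℝ) (_ : ∀ i, t i ∈ 𝕀),
          eLpE μ p (fun x => (‖a t x‖₊ : ℝ≥0∞)) :=
    le_iSup₂ (f := fun t (_ : ∀ i, t i ∈ 𝕀) =>
      eLpE μ p (fun x => ((‖a t x‖₊ : ℝ≥0∞)))) (fun _ => c) (fun _ => hc𝕀)
  have hsecond : eLpE μ p h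
      ≤ ⨆ (J : ℕ) (_ : 0 < J) (I : ℕ → ℝ)
            (_ : (∀ i ≤ J, I i ∈ 𝕀) ∧ ∀ i < J, I i < I (i + 1)),
          eLpE μ p (fun x => (∑ j ∈ Finset.range J,
              (⨆ (t : Fin k → ℝ) (_ : ∀ i, t i ∈ 𝕀 ∧ I j ≤ t i ∧ t i < I (j + 1)),
                (‖a t x - a (fun _ => I j) x‖₊ : ℝ≥0∞)) ^ 2) ^ (1 / 2 : ℝ)) := by
    refine le_iSup_of_le 1 ?_
    refine le_iSup_of_le one_pos ?_
    refine le_iSup_of_le (fun i => if i = 0 then c else s) ?_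
    refine le_iSup_of_le ⟨?_, ?_⟩ ?_
    · intro i hi
      rcases i with _ | i
      · simpa using hc𝕀
      · simpa using hs𝕀
    · intro i hi
      have hi0 : i = 0 := Nat.lt_one_iff.mp hi
      subst hi0
      simpa using hcs
    · refine le_of_eq ?_
      congr 1
      funext x
      rw [Finset.sum_range_one, hhdef]
      norm_num [sq_rpow_half]
  calc eLpE μ p (f n)
      ≤ eLpE μ p (fun x => (‖a (fun _ => c) x‖₊ : ℝ≥0∞) + h x) := eLpE_mono μ p hpt
    _ ≤ eLpE μ p (fun x => (‖a (fun _ => c) x‖₊ : ℝ≥0∞)) + eLpE μ p h :=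
        eLpE_add_le μ hp ((ha _).nnnorm.coe_nnreal_ennreal.aemeasurable) hhm.aemeasurable
    _ ≤ _ := add_le_add hfirst hsecond
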